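/- Let G be a group and let a = Σ_{g∈G} α_g g and b = Σ_{g∈G} β_g g be elements of ℂG with non-negative real coefficients such that 0 ≤ α_g ≤ β_g for every g ∈ G. Then ‖λ_G(a)‖ ≤ ‖λ_G(b)‖. -/

import Mathlib

noncomputable section

open scoped ENNReal ComplexOrder Cardinal
open Filter Topology

/-- `ℓ²(G)`, the Hilbert space of square-summable complex functions on `G`. -/
abbrev ell2 (G : Type*) : Type _ := lp (fun _ : G => ℂ) 2

section LeftRegular

variable {G : Type*} [Group G]

theorem memℓp_shift (g : G) (f : ell2 G) :
    Memℓp (fun h : G => f (g⁻¹ * h)) 2 := by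
  apply memℓp_gen
  have hf : Summable fun h : G => ‖f h‖ ^ (2 : ℝ≥0∞).toReal :=
    (memℓp_gen_iff (by norm_num)).1 (lp.memℓp f)
  simpa [Function.comp_def] using ((Equiv.mulLeft g⁻¹).summable_iff).2 hf

/-- Left translation by `g` on `ℓ²(G)` as a linear map: `(lamAux g f) h = f (g⁻¹ h)`. -/
def lamAux (g : G) : ell2 G →ₗ[ℂ] ell2 G where
  toFun f := ⟨fun h => f (g⁻¹ * h), memℓp_shift g f⟩
  map_add' _ _ := rfl
  map_smul' _ _ := rfl

theorem norm_lamAux (g : G) (f : ell2 G) : ‖lamAux g f‖ = ‖f‖ := by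
  have h2 : (0 : ℝ) < (2 : ℝ≥0∞).toReal := by norm_num
  rw [lp.norm_eq_tsum_rpow h2, lp.norm_eq_tsum_rpow h2]
  congr 1
  exact (Equiv.mulLeft g⁻¹).tsum_eq fun h => ‖f h‖ ^ (2 : ℝ≥0∞).toReal

/-- The left regular representation of `G` on `ℓ²(G)`: `(lam g f) h = f (g⁻¹ h)`. -/
def lam (g : G) : ell2 G →L[ℂ] ell2 G :=
  LinearMap.mkContinuous (lamAux g) 1 fun f => by rw [norm_lamAux, one_mul]

end LeftRegular

/-- The linear extension of the left regular representation to the group algebra `ℂ[G]`: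
`lamAlg (Σ α_g g) = Σ α_g • lam g`. -/
def lamAlg {G : Type*} [Group G] (a : MonoidAlgebra ℂ G) : ell2 G →L[ℂ] ell2 G :=
  a.coeff.sum fun g c => c • lam g

/-! Pointwise, `|λ(a) f| ≤ λ(a) |f|` for `a ≥ 0` and `λ(a) |f| ≤ λ(b) |f|` for
`0 ≤ a ≤ b`; since the `ℓ²`-norm is monotone in the pointwise modulus and
`‖|f|‖ = ‖f‖`, this gives `‖λ(a) f‖ ≤ ‖λ(b)‖ ‖f‖`. -/

section lpAbs

variable {α : Type*} {p : ℝ≥0∞}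

theorem memℓp_ofReal_norm {f : α → ℂ} (hf : Memℓp f p) : Memℓp (fun i => ((‖f i‖ : ℝ) : ℂ)) p :=
  Memℓp.of_norm (by simpa using hf.norm)

def lpAbs (f : lp (fun _ : α => ℂ) p) : lp (fun _ : α => ℂ) p :=
  ⟨fun i => ((‖f i‖ : ℝ) : ℂ), memℓp_ofReal_norm (lp.memℓp f)⟩

@[simp]
theorem lpAbs_apply (f : lp (fun _ : α => ℂ) p) (i : α) : lpAbs f i = ((‖f i‖ : ℝ) : ℂ) := rfl

theorem lpAbs_nonneg (f : lp (fun _ : α => ℂ) p) (i : α) : 0 ≤ lpAbs f i :=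
  Complex.zero_le_real.mpr (norm_nonneg _)

theorem norm_lpAbs_le (hp : p ≠ 0) (f : lp (fun _ : α => ℂ) p) : ‖lpAbs f‖ ≤ ‖f‖ :=
  lp.norm_mono hp fun i => by simp

end lpAbs

section lamAlg

variable {G : Type*} [Group G]

theorem lamAlg_apply_eq_sum (a : MonoidAlgebra ℂ G) {s : Finset G} (hs : a.coeff.support ⊆ s)
    (f : ell2 G) (h : G) : lamAlg a f h = ∑ g ∈ s, a.coeff g * f (g⁻¹ * h) := by
  rw [lamAlg, Finsupp.sum_of_support_subset _ hs _ fun g _ => zero_smul ℂ (lam g),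
    sum_apply, lp.coeFn_sum, Finset.sum_apply]
  rfl

theorem lamAlg_apply_nonneg {a : MonoidAlgebra ℂ G} (ha : ∀ g, 0 ≤ a.coeff g) {f : ell2 G}
    (hf : ∀ x, 0 ≤ f x) (h : G) : 0 ≤ lamAlg a f h := by
  rw [lamAlg_apply_eq_sum a subset_rfl]
  exact Finset.sum_nonneg fun g _ => mul_nonneg (ha g) (hf _)

theorem lamAlg_apply_mono {a b : MonoidAlgebra ℂ G} (hab : ∀ g, a.coeff g ≤ b.coeff g)
    {f : ell2 G} (hf : ∀ x, 0 ≤ f x) (h : G) : lamAlg a f h ≤ lamAlg b f h := by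
  classical
  rw [lamAlg_apply_eq_sum a Finset.subset_union_left,
    lamAlg_apply_eq_sum b (Finset.subset_union_right (s₁ := a.coeff.support))]
  exact Finset.sum_le_sum fun g _ => mul_le_mul_of_nonneg_right (hab g) (hf _)

theorem norm_lamAlg_apply_le_lamAlg_lpAbs {a : MonoidAlgebra ℂ G} (ha : ∀ g, 0 ≤ a.coeff g)
    (f : ell2 G) (h : G) : ‖lamAlg a f h‖ ≤ ‖lamAlg a (lpAbs f) h‖ := by
  have hsum : lamAlg a (lpAbs f) h =
      ((∑ g ∈ a.coeff.support, ‖a.coeff g * f (g⁻¹ * h)‖ : ℝ) : ℂ) := by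
    rw [lamAlg_apply_eq_sum a subset_rfl]
    push_cast
    refine Finset.sum_congr rfl fun g _ => ?_
    rw [norm_mul, Complex.ofReal_mul, ← Complex.eq_coe_norm_of_nonneg (ha g), lpAbs_apply]
  rw [hsum, lamAlg_apply_eq_sum a subset_rfl, Complex.norm_real, Real.norm_eq_abs]
  exact (norm_sum_le _ _).trans (le_abs_self _)

end lamAlg

/-- **Lemma 2.1 (c)**. If `a = Σ α_g g` and `b = Σ β_g g` in `ℂG` have non-negative real
coefficients with `α_g ≤ β_g` for all `g`, then `‖λ_G(a)‖ ≤ ‖λ_G(b)‖`. -/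
theorem norm_lamAlg_mono {G : Type*} [Group G] (a b : MonoidAlgebra ℂ G)
    (ha : ∀ g : G, 0 ≤ a.coeff g) (hab : ∀ g : G, a.coeff g ≤ b.coeff g) :
    ‖lamAlg a‖ ≤ ‖lamAlg b‖ := by
  refine ContinuousLinearMap.opNorm_le_bound _ (norm_nonneg _) fun f => ?_
  calc ‖lamAlg a f‖
      ≤ ‖lamAlg a (lpAbs f)‖ :=
        lp.norm_mono two_ne_zero (norm_lamAlg_apply_le_lamAlg_lpAbs ha f)
    _ ≤ ‖lamAlg b (lpAbs f)‖ := lp.norm_mono two_ne_zero fun h =>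
        CStarAlgebra.norm_le_norm_of_nonneg_of_le (lamAlg_apply_nonneg ha (lpAbs_nonneg f) h)
          (lamAlg_apply_mono hab (lpAbs_nonneg f) h)
    _ ≤ ‖lamAlg b‖ * ‖lpAbs f‖ := (lamAlg b).le_opNorm _
    _ ≤ ‖lamAlg b‖ * ‖f‖ := by gcongr; exact norm_lpAbs_le two_ne_zero f
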